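/- arXiv:1703.08627 — 4 statements merged into one kernel-verified Lean document; each statement's English description precedes it below -/
import Mathlib

section
/- Let 0 < q < 1 and let G be a geometric random variable with P(G = k) = (1-q)q^k for k ∈ ℕ. Then the least significant bit of G (i.e., G mod 2) and the remaining bits (i.e., ⌊G/2⌋) are independent; moreover G mod 2 is Bernoulli with parameter q/(1+q), and ⌊G/2⌋ is geometric with parameter 1-q^2. -/
/-!
Since `P(G = 2b + a) = (1 - q) q^a (q^2)^b`, the joint law of `(G % 2, G / 2)` is a product of a
function of `a` and a function of `b`, so the two are independent; summing the geometric series in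
`b` gives `P(G % 2 = a) = q^a / (1 + q)`, and summing over `a ∈ {0, 1}` gives
`P(G / 2 = b) = (1 - q^2) (q^2)^b`.
-/

section ParitySplit

variable {M : Type*} [AddCommMonoid M] [TopologicalSpace M]

theorem tsum_ite_mod_two_eq (f : ℕ → M) {a : ℕ} (ha : a < 2) :
    (∑' k : ℕ, if k % 2 = a then f k else 0) = ∑' j : ℕ, f (2 * j + a) := by
  have hinj : Function.Injective fun j : ℕ => 2 * j + a := fun i j h => by simp_all
  rw [← hinj.tsum_eq]
  · congr 1 with j
    rw [if_pos (by omega)]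
  · intro k hk
    have hka : k % 2 = a := by by_contra h; exact hk (if_neg h)
    exact ⟨k / 2, show 2 * (k / 2) + a = k by omega⟩

theorem tsum_ite_div_two_eq (f : ℕ → M) (b : ℕ) :
    (∑' k : ℕ, if k / 2 = b then f k else 0) = f (2 * b) + f (2 * b + 1) := by
  rw [tsum_eq_sum (s := {2 * b, 2 * b + 1}), Finset.sum_pair (by omega),
    if_pos (by omega), if_pos (by omega)]
  intro k hk
  simp only [Finset.mem_insert, Finset.mem_singleton] at hk
  rw [if_neg (by omega)]

theorem tsum_ite_mod_two_and_div_two_eq (f : ℕ → M) {a : ℕ} (ha : a < 2) (b : ℕ) :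
    (∑' k : ℕ, if k % 2 = a ∧ k / 2 = b then f k else 0) = f (2 * b + a) := by
  rw [tsum_eq_single (2 * b + a), if_pos ⟨by omega, by omega⟩]
  intro k hk
  rw [if_neg fun h => hk (by omega)]

end ParitySplit

section Geometric

variable {q : ℝ}

theorem tsum_geometric_pmf_two_mul_add (hq : |q| < 1) (a : ℕ) :
    ∑' j : ℕ, (1 - q) * q ^ (2 * j + a) = q ^ a / (1 + q) := by
  obtain ⟨hq₁, hq₂⟩ := abs_lt.mp hq
  have hsq : |q ^ 2| < 1 := by rw [abs_pow]; exact pow_lt_one₀ (abs_nonneg q) hq two_ne_zero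
  have hterm : ∀ j : ℕ, (1 - q) * q ^ (2 * j + a) = (1 - q) * q ^ a * (q ^ 2) ^ j := fun j => by
    rw [pow_add, pow_mul]; ring
  have h1q : 1 + q ≠ 0 := by linarith
  have h1q' : 1 - q ≠ 0 := by linarith
  simp_rw [hterm, tsum_mul_left, tsum_geometric_of_abs_lt_one hsq,
    show (1 : ℝ) - q ^ 2 = (1 - q) * (1 + q) by ring]
  field_simp

theorem geometric_pmf_two_mul_add_succ (b : ℕ) :
    (1 - q) * q ^ (2 * b) + (1 - q) * q ^ (2 * b + 1) = (1 - q ^ 2) * (q ^ 2) ^ b := by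
  rw [pow_succ, pow_mul]; ring

end Geometric

/-- If `G` is geometric with `P(G = k) = (1-q) q^k`, then the least significant bit
`G % 2` and the remaining bits `G / 2` are independent, `G % 2` is Bernoulli with
parameter `q/(1+q)`, and `G / 2` is geometric with parameter `1 - q^2`. -/
theorem stmt_1 (q : ℝ) (hq0 : 0 < q) (hq1 : q < 1)
    (pG : ℕ → ℝ) (hG : ∀ k, pG k = (1 - q) * q ^ k) :
    -- the least significant bit is Bernoulli(q/(1+q))
    ((∑' k : ℕ, if k % 2 = 1 then pG k else 0) = q / (1 + q)
      ∧ (∑' k : ℕ, if k % 2 = 0 then pG k else 0) = 1 - q / (1 + q))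
    -- the remaining bits form a geometric with parameter 1 - q^2
    ∧ (∀ b : ℕ, (∑' k : ℕ, if k / 2 = b then pG k else 0)
        = (1 - q ^ 2) * (q ^ 2) ^ b)
    -- independence: the joint law factors as the product of the marginals
    ∧ (∀ a b : ℕ, a ≤ 1 →
        (∑' k : ℕ, if k % 2 = a ∧ k / 2 = b then pG k else 0)
          = (∑' k : ℕ, if k % 2 = a then pG k else 0)
            * (∑' k : ℕ, if k / 2 = b then pG k else 0)) := by
  obtain rfl : pG = fun k => (1 - q) * q ^ k := funext hG
  have hq : |q| < 1 := abs_lt.mpr ⟨by linarith, hq1⟩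
  have hmod : ∀ a < 2, (∑' k : ℕ, if k % 2 = a then (1 - q) * q ^ k else 0) = q ^ a / (1 + q) :=
    fun a ha => by rw [tsum_ite_mod_two_eq _ ha, tsum_geometric_pmf_two_mul_add hq]
  have hdiv : ∀ b : ℕ, (∑' k : ℕ, if k / 2 = b then (1 - q) * q ^ k else 0)
      = (1 - q ^ 2) * (q ^ 2) ^ b :=
    fun b => by rw [tsum_ite_div_two_eq, geometric_pmf_two_mul_add_succ]
  have h1q : 1 + q ≠ 0 := by positivity
  refine ⟨⟨by simpa using hmod 1 one_lt_two, ?_⟩, hdiv, fun a b ha => ?_⟩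
  · rw [hmod 0 two_pos]
    field_simp
    ring
  · rw [tsum_ite_mod_two_and_div_two_eq _ (by omega), hmod a (by omega), hdiv, pow_add, pow_mul]
    field_simp
    ring
end

section
/- Probabilistic divide-and-conquer lemma: Let A and B be independent random elements of sets 𝒜 and ℬ respectively, and let E ⊆ 𝒜 × ℬ be an event with P((A,B) ∈ E) > 0. Let X be a random element of 𝒜 with distribution L(X) = L(A | (A,B) ∈ E), and let Y be a random element of ℬ whose conditional distribution given X = a is L(B | (a,B) ∈ E). Then the pair (X,Y) has the same distribution as (A,B) conditioned on E, i.e., for all measurable S ⊆ 𝒜 × ℬ, P((X,Y) ∈ S) = P((A,B) ∈ S | (A,B) ∈ E). -/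
/-!
Conditioning on `X = a` cuts the section sum `S a = ∑' b, [(a, b) ∈ E] pB b` out of both
factors: `pX a = pA a * S a / PE` and `pY a b = [(a, b) ∈ E] pB b / S a`, so the product is
`[(a, b) ∈ E] pA a pB b / PE`. When `S a = 0`, nonnegativity and summability of `pB` force every
term of the section to vanish, and both sides are `0`.
-/

theorem eq_zero_of_tsum_eq_zero_of_nonneg {ι : Type*} {f : ι → ℝ} (hf : Summable f)
    (hf₀ : ∀ i, 0 ≤ f i) (h : ∑' i, f i = 0) (i : ι) : f i = 0 := by
  have hsum : HasSum f 0 := h ▸ hf.hasSum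
  rw [hasSum_zero_iff_of_nonneg hf₀] at hsum
  exact congr_fun hsum i

theorem mul_div_mul_div_cancel_of_eq_zero {K : Type*} [Field K] {s x : K} (c p : K)
    (h : s = 0 → x = 0) : c * s / p * (x / s) = c * x / p := by
  rcases eq_or_ne s 0 with hs | hs
  · simp [hs, h hs]
  · field_simp

theorem stmt_10_general {α β : Type*} (pA : α → ℝ) (pB : β → ℝ)
    (hB : ∀ b, 0 ≤ pB b)
    (hBsum : ∑' b, pB b = 1)
    (E : Set (α × β)) [DecidablePred (· ∈ E)]
    (PE : ℝ)
    (pX : α → ℝ)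
    (hpX : ∀ a, pX a = (∑' b, if (a, b) ∈ E then pA a * pB b else 0) / PE)
    (pY : α → β → ℝ)
    (hpY : ∀ a b, pY a b
      = (if (a, b) ∈ E then pB b else 0) / (∑' b', if (a, b') ∈ E then pB b' else 0)) :
    ∀ a b, pX a * pY a b = (if (a, b) ∈ E then pA a * pB b else 0) / PE := by
  intro a b
  have hpB : Summable pB := by
    by_contra h
    simp [tsum_eq_zero_of_not_summable h] at hBsum
  have hsection₀ : ∀ b', 0 ≤ if (a, b') ∈ E then pB b' else 0 :=
    fun b' => ite_nonneg (hB b') le_rfl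
  have hsection : Summable fun b' => if (a, b') ∈ E then pB b' else 0 :=
    hpB.of_nonneg_of_le hsection₀ fun b' => by split_ifs <;> simp [hB b']
  have hfactor : (∑' b', if (a, b') ∈ E then pA a * pB b' else 0)
      = pA a * ∑' b', if (a, b') ∈ E then pB b' else 0 := by
    simp_rw [← mul_ite_zero]
    exact tsum_mul_left
  rw [hpX, hpY, hfactor, mul_div_mul_div_cancel_of_eq_zero _ _
    (fun h => eq_zero_of_tsum_eq_zero_of_nonneg hsection hsection₀ h b), mul_ite_zero]

/-- Probabilistic divide-and-conquer lemma (countable case). Let `A`, `B` be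
independent discrete random elements with mass functions `pA`, `pB`, and let `E` be
an event of positive probability `PE`. Let `X` have the law of `A` conditioned on
`E`, and given `X = a` let `Y` have the law of `B` conditioned on `E` and `A = a`.
Then the pair `(X, Y)` has the law of `(A, B)` conditioned on `E`:
`P(X = a)·P(Y = b | X = a) = P(A = a, B = b)/P(E)` for `(a,b) ∈ E` (and `0` off `E`). -/
theorem stmt_10 {α β : Type*} (pA : α → ℝ) (pB : β → ℝ)
    (hA : ∀ a, 0 ≤ pA a) (hB : ∀ b, 0 ≤ pB b)
    (hAsum : ∑' a, pA a = 1) (hBsum : ∑' b, pB b = 1)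
    (E : Set (α × β)) [DecidablePred (· ∈ E)]
    (PE : ℝ) (hPE : PE = ∑' p : α × β, if p ∈ E then pA p.1 * pB p.2 else 0)
    (hPEpos : 0 < PE)
    (pX : α → ℝ)
    (hpX : ∀ a, pX a = (∑' b, if (a, b) ∈ E then pA a * pB b else 0) / PE)
    (pY : α → β → ℝ)
    (hpY : ∀ a b, pY a b
      = (if (a, b) ∈ E then pB b else 0) / (∑' b', if (a, b') ∈ E then pB b' else 0)) :
    ∀ a b, pX a * pY a b = (if (a, b) ∈ E then pA a * pB b else 0) / PE :=
  stmt_10_general pA pB hB hBsum E PE pX hpX pY hpY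
end

section
/- Let 0 < x < 1 and let Z_1,...,Z_n be independent random variables with Z_i geometric with parameter 1 - x^i, i.e., P(Z_i = k) = (1 - x^i)x^{ik}. Then the event {Σ_{i=1}^n i·Z_i = n} has positive probability, and conditioned on this event, the joint distribution of (Z_1,...,Z_n) is uniform over the set of all (z_1,...,z_n) ∈ ℕ^n with Σ i·z_i = n; i.e., each integer partition of n (encoded by its part multiplicities) is equally likely, with conditional probability 1/p(n), where p(n) is the number of partitions of n. -/
/-!
On the event `∑ i·zᵢ = n` the weight `∏ (1 - xⁱ) x^{i zᵢ} = (∏ (1 - xⁱ)) xⁿ` does not depend on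
`z`, so the conditional law is uniform. Multiplicity vectors of weighted sum `n` correspond
bijectively to partitions of `n` (take `zᵢ` parts equal to `i`), so there are `p(n)` of them.
-/

open Finset

namespace Nat.Partition

theorem sum_replicate_count_eq_parts {n : ℕ} (p : Partition n) :
    ∑ i : Fin n, Multiset.replicate (p.parts.count (i.val + 1)) (i.val + 1) = p.parts := by
  have hsub : p.parts.toFinset ⊆ Ico 1 (n + 1) := fun m hm => by
    rw [Multiset.mem_toFinset] at hm
    exact mem_Ico.2 ⟨p.parts_pos hm, Nat.lt_succ_of_le (p.le_of_mem_parts hm)⟩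
  calc ∑ i : Fin n, Multiset.replicate (p.parts.count (i.val + 1)) (i.val + 1)
      = ∑ m ∈ Ico 1 (n + 1), p.parts.count m • {m} := by
        simp only [sum_Ico_eq_sum_range,
          ← Fin.sum_univ_eq_sum_range (fun i => Multiset.replicate (p.parts.count (i + 1)) (i + 1)),
          Nat.add_sub_cancel, Multiset.nsmul_singleton, add_comm 1]
    _ = ∑ m ∈ p.parts.toFinset, p.parts.count m • {m} :=
        (sum_subset hsub fun m _ hm => by
          rw [Multiset.count_eq_zero.2 (by simpa using hm), zero_smul]).symm
    _ = p.parts := Multiset.toFinset_sum_count_nsmul_eq _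

theorem sum_mul_count_eq {n : ℕ} (p : Partition n) :
    ∑ i : Fin n, (i.val + 1) * p.parts.count (i.val + 1) = n := by
  conv_rhs => rw [← p.parts_sum, ← p.sum_replicate_count_eq_parts]
  simp [Multiset.sum_sum, mul_comm]

def ofMultiplicities {n : ℕ} (z : Fin n → ℕ) (hz : ∑ i, (i.val + 1) * z i = n) :
    Partition n where
  parts := ∑ i, Multiset.replicate (z i) (i.val + 1)
  parts_pos hm := by
    obtain ⟨i, -, hm⟩ := Multiset.mem_sum.1 hm
    rw [Multiset.eq_of_mem_replicate hm]
    exact Nat.succ_pos _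
  parts_sum := by simpa [Multiset.sum_sum, mul_comm] using hz

theorem count_ofMultiplicities {n : ℕ} (z : Fin n → ℕ) (hz : ∑ i, (i.val + 1) * z i = n)
    (i : Fin n) : (ofMultiplicities z hz).parts.count (i.val + 1) = z i := by
  simp [ofMultiplicities, Multiset.count_sum', Multiset.count_replicate, Fin.val_eq_val]

def multiplicityEquiv (n : ℕ) :
    {z : Fin n → ℕ // ∑ i, (i.val + 1) * z i = n} ≃ Partition n where
  toFun z := ofMultiplicities z.1 z.2
  invFun p := ⟨fun i => p.parts.count (i.val + 1), p.sum_mul_count_eq⟩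
  left_inv z := Subtype.ext (funext (count_ofMultiplicities z.1 z.2))
  right_inv p := Partition.ext p.sum_replicate_count_eq_parts

end Nat.Partition

def multiplicityVectors (n : ℕ) : Finset (Fin n → ℕ) :=
  (Fintype.piFinset fun _ : Fin n => range (n + 1)).filter fun z => ∑ i, (i.val + 1) * z i = n

theorem mem_multiplicityVectors {n : ℕ} {z : Fin n → ℕ} :
    z ∈ multiplicityVectors n ↔ ∑ i, (i.val + 1) * z i = n := by
  refine ⟨fun h => (mem_filter.1 h).2, fun hz => mem_filter.2 ⟨?_, hz⟩⟩
  refine Fintype.mem_piFinset.2 fun i => mem_range.2 (Nat.lt_succ_of_le ?_)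
  calc z i ≤ (i.val + 1) * z i := Nat.le_mul_of_pos_left _ i.val.succ_pos
    _ ≤ ∑ j, (j.val + 1) * z j :=
        single_le_sum (f := fun j : Fin n => (j.val + 1) * z j) (fun _ _ => Nat.zero_le _)
          (mem_univ i)
    _ = n := hz

theorem card_multiplicityVectors (n : ℕ) :
    #(multiplicityVectors n) = Fintype.card (Nat.Partition n) :=
  card_eq_of_equiv_fintype
    ((Equiv.subtypeEquivRight fun _ => mem_multiplicityVectors).trans
      (Nat.Partition.multiplicityEquiv n))

/-- Let `Z₁,…,Zₙ` be independent, `Zᵢ` geometric with parameter `1 - xⁱ`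
(`P(Zᵢ = k) = (1 - xⁱ)x^{ik}`, here indexed so that part size `i+1` corresponds to
`i : Fin n`). The event `{∑ i·Zᵢ = n}` has positive probability, and conditioned on
it, the vector `(Z₁,…,Zₙ)` is uniform over all multiplicity vectors of partitions of
`n`: each such vector has conditional probability `1/p(n)`, where `p(n)` is the
number of partitions of `n`. -/
theorem stmt_12 (n : ℕ) (x : ℝ) (hx0 : 0 < x) (hx1 : x < 1)
    (S : Finset (Fin n → ℕ))
    (hS : S = (Fintype.piFinset fun _ : Fin n => Finset.range (n + 1)).filter
        (fun z => ∑ i, (i.val + 1) * z i = n))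
    (PE : ℝ)
    (hPE : PE = ∑ z ∈ S, ∏ i, ((1 - x ^ (i.val + 1)) * x ^ ((i.val + 1) * z i))) :
    0 < PE
    ∧ S.card = Fintype.card (Nat.Partition n)
    ∧ ∀ z : Fin n → ℕ, (∑ i, (i.val + 1) * z i = n) →
        (∏ i, ((1 - x ^ (i.val + 1)) * x ^ ((i.val + 1) * z i))) / PE
          = 1 / Fintype.card (Nat.Partition n) := by
  obtain rfl : S = multiplicityVectors n := hS
  set w : ℝ := (∏ i : Fin n, (1 - x ^ (i.val + 1))) * x ^ n
  have hweight : ∀ z : Fin n → ℕ, ∑ i, (i.val + 1) * z i = n →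
      ∏ i, ((1 - x ^ (i.val + 1)) * x ^ ((i.val + 1) * z i)) = w := fun z hz => by
    rw [prod_mul_distrib, prod_pow_eq_pow_sum, hz]
  have hw : 0 < w :=
    mul_pos (prod_pos fun i _ => sub_pos.2 (pow_lt_one₀ hx0.le hx1 i.val.succ_ne_zero))
      (pow_pos hx0 n)
  have hcard : (0 : ℝ) < Fintype.card (Nat.Partition n) := Nat.cast_pos.2 Fintype.card_pos
  have hPE_eq : PE = Fintype.card (Nat.Partition n) * w := by
    rw [hPE, sum_congr rfl fun z hz => hweight z (mem_multiplicityVectors.1 hz), sum_const,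
      card_multiplicityVectors, nsmul_eq_mul]
  refine ⟨hPE_eq ▸ mul_pos hcard hw, card_multiplicityVectors n, fun z hz => ?_⟩
  rw [hweight z hz, hPE_eq, div_mul_cancel_right₀ hw.ne', one_div]
end

section
/- Let A be a random element of a countable set, E a positive-probability event, and suppose we sample a ~ L(A) and accept with probability s(a) = P(E | A = a) (rejecting and restarting otherwise); upon acceptance of a we sample y from L(B | E, A = a) where B is independent of A and E is an event of (A,B). Then the output (a, y) has distribution L((A,B) | E). -/
/-!
Each round accepts with probability `∑ₐ pA a * s a`, which Fubini identifies with `P(E)`, so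
summing the geometric series over rejected rounds gives `P(first accepted value = a) =
pA a * s a / P(E)`. Multiplying by the conditional mass `pB b / s a` cancels `s a`; when
`s a = 0` the bound `pB b ≤ s a` forces `pB b = 0`, so the junk value `x / 0 = 0` is harmless.
-/

open Set

theorem summable_of_tsum_ne_zero {ι M : Type*} [AddCommMonoid M] [TopologicalSpace M]
    {f : ι → M} (h : ∑' i, f i ≠ 0) : Summable f :=
  by_contra fun hf => h (tsum_eq_zero_of_not_summable hf)

theorem tsum_one_sub_pow_mul {q : ℝ} (hq0 : 0 < q) (hq1 : q ≤ 1) (c : ℝ) :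
    ∑' t : ℕ, (1 - q) ^ t * c = c / q := by
  rw [tsum_mul_right, tsum_geometric_of_lt_one (by linarith) (by linarith), sub_sub_cancel,
    inv_mul_eq_div]

section ProductMass

variable {α β : Type*} {pA : α → ℝ} {pB : β → ℝ} (E : Set (α × β)) [DecidablePred (· ∈ E)]

theorem summable_ite_mem_mul (hpA : Summable pA) (hpB : Summable pB)
    (hA : ∀ a, 0 ≤ pA a) (hB : ∀ b, 0 ≤ pB b) :
    Summable fun p : α × β => if p ∈ E then pA p.1 * pB p.2 else 0 :=
  ((hpA.mul_of_nonneg hpB hA hB).indicator E).congr fun p => indicator_apply E _ p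

theorem tsum_ite_mem_mul_eq_tsum_mul_tsum_section (hpA : Summable pA) (hpB : Summable pB)
    (hA : ∀ a, 0 ≤ pA a) (hB : ∀ b, 0 ≤ pB b) :
    ∑' p : α × β, (if p ∈ E then pA p.1 * pB p.2 else 0)
      = ∑' a, pA a * ∑' b, if (a, b) ∈ E then pB b else 0 := by
  rw [(summable_ite_mem_mul E hpA hpB hA hB).tsum_prod]
  refine tsum_congr fun a => ?_
  rw [← tsum_mul_left]
  simp only [mul_ite, mul_zero]

theorem tsum_ite_mem_mul_le (hpA : Summable pA) (hpB : Summable pB)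
    (hA : ∀ a, 0 ≤ pA a) (hB : ∀ b, 0 ≤ pB b) :
    ∑' p : α × β, (if p ∈ E then pA p.1 * pB p.2 else 0) ≤ (∑' a, pA a) * ∑' b, pB b := by
  have hprod := hpA.mul_of_nonneg hpB hA hB
  rw [hpA.tsum_mul_tsum hpB hprod]
  refine (summable_ite_mem_mul E hpA hpB hA hB).tsum_le_tsum (fun p => ?_) hprod
  split_ifs
  · exact le_rfl
  · exact mul_nonneg (hA _) (hB _)

theorem le_tsum_ite_mem_section (hpB : Summable pB) (hB : ∀ b, 0 ≤ pB b) {a : α} {b : β}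
    (hab : (a, b) ∈ E) : pB b ≤ ∑' b', if (a, b') ∈ E then pB b' else 0 := by
  have hsec : Summable fun b' => if (a, b') ∈ E then pB b' else 0 :=
    (hpB.indicator {b' | (a, b') ∈ E}).congr fun b' => indicator_apply _ pB b'
  simpa only [if_pos hab] using
    hsec.le_tsum b fun b' _ => by split_ifs <;> simp [hB b']

end ProductMass

/-- PDC with soft rejection. Let `A`, `B` be independent discrete random variables
with mass functions `pA`, `pB`, and `E` an event of positive probability `PE`.
Repeatedly sample `a ~ L(A)` and accept with probability `s a = P(E | A = a)`
(summing a geometric series over the rejected trials); upon acceptance sample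
`y ~ L(B | E, A = a)`. Then the output `(a, y)` has law `L((A,B) | E)`:
`P(output = (a,b)) = P(A = a, B = b)/P(E)` for `(a,b) ∈ E`. -/
theorem stmt_17 {α β : Type*} (pA : α → ℝ) (pB : β → ℝ)
    (hA : ∀ a, 0 ≤ pA a) (hB : ∀ b, 0 ≤ pB b)
    (hAsum : ∑' a, pA a = 1) (hBsum : ∑' b, pB b = 1)
    (E : Set (α × β)) [DecidablePred (· ∈ E)]
    (PE : ℝ) (hPE : PE = ∑' p : α × β, if p ∈ E then pA p.1 * pB p.2 else 0)
    (hPEpos : 0 < PE)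
    -- s a = P(E | A = a)
    (s : α → ℝ) (hs : ∀ a, s a = ∑' b, if (a, b) ∈ E then pB b else 0)
    -- law of the first accepted value of A (geometric series over rejections)
    (outA : α → ℝ)
    (houtA : ∀ a, outA a
      = ∑' t : ℕ, (1 - ∑' a', pA a' * s a') ^ t * (pA a * s a))
    -- conditional sampling of B given acceptance of a
    (out : α → β → ℝ)
    (hout : ∀ a b, out a b = outA a * ((if (a, b) ∈ E then pB b else 0) / s a)) :
    ∀ a b, (a, b) ∈ E → out a b = pA a * pB b / PE := by
  intro a b hab
  have hpA : Summable pA := summable_of_tsum_ne_zero (by simp [hAsum])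
  have hpB : Summable pB := summable_of_tsum_ne_zero (by simp [hBsum])
  have hacc : ∑' a', pA a' * s a' = PE := by
    simp only [hs, hPE, tsum_ite_mem_mul_eq_tsum_mul_tsum_section E hpA hpB hA hB]
  have hPEle : PE ≤ 1 := by
    simpa only [hPE, hAsum, hBsum, one_mul] using tsum_ite_mem_mul_le E hpA hpB hA hB
  have hbs : pB b ≤ s a := hs a ▸ le_tsum_ite_mem_section E hpB hB hab
  rw [hout, houtA, hacc, tsum_one_sub_pow_mul hPEpos hPEle, if_pos hab]
  rcases (hB b).trans hbs |>.eq_or_lt with hs0 | hs0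
  · have hb0 : pB b = 0 := le_antisymm (hs0 ▸ hbs) (hB b)
    simp [← hs0, hb0]
  · field_simp
end
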